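/- (Categorical Green-type correspondence.) Let A be a k-linear abelian category with char(k) = p > 0, G a finite group, P a Sylow p-subgroup of G, and L = N_G(P) its normalizer. If H ≤ G contains L, then Triv_G ≅ Triv_H ∘ Res^G_H as functors Rep(G,A) → A. Moreover the canonical natural transformation H^0(G,−) ⇒ Triv_H is epic and Triv_H ⇒ H_0(G,−) is monic. -/

import Mathlib

open CategoryTheory CategoryTheory.Limits

universe v u

/-- The category `Rep(G, A)` of `G`-objects in a category `A`, i.e. functors `G → A`
where the group `G` is viewed as a one-object category. -/
abbrev GRep (A : Type u) [Category.{v} A] (G : Type*) [Monoid G] := SingleObj G ⥤ A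

/-- The embedding `A → Rep(G, A)` equipping an object with the trivial `G`-action. -/
abbrev trivialRep (A : Type u) [Category.{v} A] (G : Type*) [Monoid G] :
    A ⥤ GRep A G :=
  Functor.const (SingleObj G)

/-- Restriction `Rep(G, A) → Rep(H, A)` along a monoid homomorphism `f : H →* G`. -/
def resHom (A : Type u) [Category.{v} A] {G H : Type*} [Monoid G] [Monoid H] (f : H →* G) :
    GRep A G ⥤ GRep A H :=
  (Functor.whiskeringLeft _ _ A).obj (SingleObj.mapHom H G f)

/-!
Let `j : H⁰(G, X) → H⁰(H, X)` be restriction, `t = ∑_{gH ∈ G/H} g : H⁰(H, X) → H⁰(G, X)` the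
transfer, dually `r : H₀(H, X) → H₀(G, X)` and `s = ∑_{gH} g⁻¹ : H₀(G, X) → H₀(H, X)`, and let
`N = ι ≫ π : H⁰ → H₀` be the norm maps. Since `N_G(P) ≤ H`, the coset `H` is the only fixed point
of `P` on `G/H`; as every other `P`-orbit has size divisible by `p`, a `P`-invariant function on
`G/H` with values in a `k`-vector space sums to its value at `H`. For constant functions this says
`[G : H] = 1` in `k`, which gives `j ≫ t = 1`, `t ≫ N_G = N_H ≫ r` and `j ≫ N_H = N_G ≫ s`; for
`gH ↦ ι_H ≫ g ≫ π_H` it gives Green's identity `t ≫ j ≫ N_H = N_H`. Hence `(j, s)` and `(t, r)`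
induce mutually inverse maps between the images `Triv_G X` of `N_G` and `Triv_H X` of `N_H`.
-/

section SylowFixedPoints

open MulAction

theorem IsPGroup.sum_eq_zero_of_smul_invariant {p : ℕ} [Fact p.Prime] {P α R M : Type*}
    [Group P] [MulAction P α] [Fintype α] [Semiring R] [CharP R p] [AddCommMonoid M] [Module R M]
    (hP : IsPGroup p P) (φ : α → M) (hφ : ∀ (g : P) (a : α), φ (g • a) = φ a)
    (hfix : ∀ a ∈ fixedPoints P α, φ a = 0) : ∑ a, φ a = 0 := by
  classical
  rw [← (selfEquivSigmaOrbits P α).symm.sum_comp, Fintype.sum_sigma]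
  refine Finset.sum_eq_zero fun ω _ => ?_
  have hconst : ∀ b : orbit P ω.out, φ b = φ ω.out := by
    rintro ⟨-, g, rfl⟩
    exact hφ g _
  calc ∑ b, φ ((selfEquivSigmaOrbits P α).symm ⟨ω, b⟩)
      = ∑ _b : orbit P ω.out, φ ω.out := Finset.sum_congr rfl fun b _ => hconst b
    _ = Nat.card (orbit P ω.out) • φ ω.out := by
      rw [Finset.sum_const, Finset.card_univ, Nat.card_eq_fintype_card]
    _ = 0 := by
      obtain ⟨n, hn⟩ := hP.card_orbit ω.out
      rcases n with _ | n
      · rw [hfix _ (mem_fixedPoints_iff_card_orbit_eq_one.mpr ?_), smul_zero]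
        rwa [pow_zero, Nat.card_eq_fintype_card] at hn
      · rw [hn, ← Nat.cast_smul_eq_nsmul R, Nat.cast_pow, CharP.cast_eq_zero,
          zero_pow n.succ_ne_zero, zero_smul]

theorem IsPGroup.sum_eq_of_fixedPoints_eq_singleton {p : ℕ} [Fact p.Prime] {P α R M : Type*}
    [Group P] [MulAction P α] [Fintype α] [Semiring R] [CharP R p] [AddCommMonoid M] [Module R M]
    (hP : IsPGroup p P) (φ : α → M) (hφ : ∀ (g : P) (a : α), φ (g • a) = φ a)
    {a₀ : α} (hfix : fixedPoints P α = {a₀}) : ∑ a, φ a = φ a₀ := by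
  classical
  have ha₀ : ∀ g : P, g • a₀ = a₀ := (hfix.symm ▸ rfl : a₀ ∈ fixedPoints P α)
  have hrest : ∑ a, (if a = a₀ then 0 else φ a) = 0 := by
    refine hP.sum_eq_zero_of_smul_invariant (R := R) _ (fun g a => ?_) fun a ha => ?_
    · simp only [smul_eq_iff_eq_inv_smul, ha₀, hφ]
    · rw [hfix] at ha
      exact if_pos ha
  calc ∑ a, φ a = φ a₀ + ∑ a ∈ {a₀}ᶜ, φ a := Fintype.sum_eq_add_sum_compl a₀ φ
    _ = φ a₀ + ∑ a, (if a = a₀ then 0 else φ a) := by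
      rw [Fintype.sum_eq_add_sum_compl a₀ (fun a => if a = a₀ then 0 else φ a), if_pos rfl,
        zero_add]
      exact congrArg _ (Finset.sum_congr rfl fun a ha =>
        (if_neg (Finset.notMem_singleton.mp (Finset.mem_compl.mp ha))).symm)
    _ = φ a₀ := by rw [hrest, add_zero]

theorem Sylow.mem_of_smul_le_of_normalizer_le {p : ℕ} [Fact p.Prime] {G : Type*} [Group G]
    [Finite G] (P : Sylow p G) {H : Subgroup G}
    (hPH : Subgroup.normalizer ((P : Subgroup G) : Set G) ≤ H) {g : G}
    (hg : ((g • P : Sylow p G) : Subgroup G) ≤ H) : g ∈ H := by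
  have hP : (P : Subgroup G) ≤ H := Subgroup.le_normalizer.trans hPH
  obtain ⟨h, hh⟩ := exists_smul_eq H ((g • P).subtype hg) (P.subtype hP)
  simp_rw [Sylow.smul_subtype, Subgroup.smul_def, smul_smul] at hh
  have := hPH (Sylow.smul_eq_iff_mem_normalizer.mp (Sylow.subtype_injective hh))
  simpa using H.mul_mem (H.inv_mem h.2) this

theorem Sylow.fixedPoints_quotient_eq_singleton {p : ℕ} [Fact p.Prime] {G : Type*} [Group G]
    [Finite G] (P : Sylow p G) {H : Subgroup G}
    (hPH : Subgroup.normalizer ((P : Subgroup G) : Set G) ≤ H) :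
    fixedPoints (P : Subgroup G) (G ⧸ H) = {((1 : G) : G ⧸ H)} := by
  have hP : (P : Subgroup G) ≤ H := Subgroup.le_normalizer.trans hPH
  ext c
  induction c using QuotientGroup.induction_on with | H g => ?_
  have hsmul : ∀ x : (P : Subgroup G), x • (g : G ⧸ H) = g ↔ g⁻¹ * (x : G)⁻¹ * g ∈ H :=
    fun x => QuotientGroup.eq.trans (by simp [mul_assoc])
  rw [mem_fixedPoints, Set.mem_singleton_iff, QuotientGroup.eq, mul_one]
  constructor
  · intro hfix
    refine P.mem_of_smul_le_of_normalizer_le hPH fun y hy => ?_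
    rw [Sylow.coe_subgroup_smul, Subgroup.mem_pointwise_smul_iff_inv_smul_mem] at hy
    simpa [mul_assoc] using H.inv_mem ((hsmul ⟨_, hy⟩).mp (hfix _))
  · intro hg x
    have hg' : g ∈ H := by simpa using H.inv_mem hg
    exact (hsmul x).mpr (H.mul_mem (H.mul_mem hg (H.inv_mem (hP x.2))) hg')

theorem Sylow.sum_quotient_eq_of_normalizer_le {p : ℕ} [Fact p.Prime] {G R M : Type*} [Group G]
    [Finite G] [Semiring R] [CharP R p] [AddCommMonoid M] [Module R M] (P : Sylow p G)
    {H : Subgroup G} (hPH : Subgroup.normalizer ((P : Subgroup G) : Set G) ≤ H)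
    [Fintype (G ⧸ H)] (φ : G ⧸ H → M) (hφ : ∀ (x : (P : Subgroup G)) c, φ (x • c) = φ c) :
    ∑ c, φ c = φ ((1 : G) : G ⧸ H) :=
  P.isPGroup'.sum_eq_of_fixedPoints_eq_singleton (R := R) φ hφ
    (P.fixedPoints_quotient_eq_singleton hPH)

theorem Sylow.sum_const_quotient_of_normalizer_le {p : ℕ} [Fact p.Prime] {G R M : Type*}
    [Group G] [Finite G] [Semiring R] [CharP R p] [AddCommMonoid M] [Module R M] (P : Sylow p G)
    {H : Subgroup G} (hPH : Subgroup.normalizer ((P : Subgroup G) : Set G) ≤ H)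
    [Fintype (G ⧸ H)] (m : M) : ∑ _c : G ⧸ H, m = m :=
  P.sum_quotient_eq_of_normalizer_le (R := R) hPH (fun _ => m) fun _ _ => rfl

end SylowFixedPoints

section ImageComparison

variable {C : Type*} [Category C] {I₁ T₁ N₁ I₂ T₂ N₂ : C} {p₁ : I₁ ⟶ T₁} {i₁ : T₁ ⟶ N₁}
  {p₂ : I₂ ⟶ T₂} {i₂ : T₂ ⟶ N₂} [StrongEpi p₁] [Mono i₁] [StrongEpi p₂] [Mono i₂]
  {j : I₁ ⟶ I₂} {t : I₂ ⟶ I₁} {r : N₂ ⟶ N₁} {s : N₁ ⟶ N₂}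

noncomputable def imageIsoOfRetract (hjt : j ≫ t = 𝟙 I₁) (htj : t ≫ j ≫ p₂ ≫ i₂ = p₂ ≫ i₂)
    (ht : t ≫ p₁ ≫ i₁ = p₂ ≫ i₂ ≫ r) (hj : j ≫ p₂ ≫ i₂ = p₁ ≫ i₁ ≫ s) : T₁ ≅ T₂ where
  hom := (CommSq.mk (f := j ≫ p₂) (g := p₁) (h := i₂) (i := i₁ ≫ s) (by simpa using hj)).lift
  inv := (CommSq.mk (f := t ≫ p₁) (g := p₂) (h := i₁) (i := i₂ ≫ r) (by simpa using ht)).lift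
  hom_inv_id := by
    rw [← cancel_epi p₁, CommSq.fac_left_assoc, Category.assoc, CommSq.fac_left,
      reassoc_of% hjt, Category.comp_id]
  inv_hom_id := by
    rw [← cancel_epi p₂, ← cancel_mono i₂]
    simp only [Category.assoc, Category.comp_id, CommSq.fac_left_assoc, htj]

variable (hjt : j ≫ t = 𝟙 I₁) (htj : t ≫ j ≫ p₂ ≫ i₂ = p₂ ≫ i₂)
  (ht : t ≫ p₁ ≫ i₁ = p₂ ≫ i₂ ≫ r) (hj : j ≫ p₂ ≫ i₂ = p₁ ≫ i₁ ≫ s)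

lemma comp_imageIsoOfRetract_hom : p₁ ≫ (imageIsoOfRetract hjt htj ht hj).hom = j ≫ p₂ :=
  CommSq.fac_left (f := j ≫ p₂) _

lemma imageIsoOfRetract_inv_comp : (imageIsoOfRetract hjt htj ht hj).inv ≫ i₁ = i₂ ≫ r :=
  CommSq.fac_right (i := i₁) (f := i₂ ≫ r) _

end ImageComparison

namespace GRep

section Monoid

variable {A : Type u} [Category.{v} A] {M : Type*} [Monoid M]

def act (X : GRep A M) (m : M) : X.obj (SingleObj.star M) ⟶ X.obj (SingleObj.star M) :=
  X.map (show SingleObj.star M ⟶ SingleObj.star M from m)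

lemma act_mul (X : GRep A M) (a b : M) : X.act (a * b) = X.act b ≫ X.act a :=
  X.map_comp _ _

lemma hom_ext {X Y : GRep A M} {f g : X ⟶ Y}
    (h : f.app (SingleObj.star M) = g.app (SingleObj.star M)) : f = g :=
  NatTrans.ext (funext fun _ => h)

def fromTrivial (X : GRep A M) {W : A} (f : W ⟶ X.obj (SingleObj.star M))
    (hf : ∀ m, f ≫ X.act m = f) : (trivialRep A M).obj W ⟶ X where
  app _ := f
  naturality _ _ m := (Category.id_comp f).trans (hf m).symm

def toTrivial (X : GRep A M) {Z : A} (f : X.obj (SingleObj.star M) ⟶ Z)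
    (hf : ∀ m, X.act m ≫ f = f) : X ⟶ (trivialRep A M).obj Z where
  app _ := f
  naturality _ _ m := (hf m).trans (Category.comp_id f).symm

section Invariants

variable {R : GRep A M ⥤ A} (adj : trivialRep A M ⊣ R)

def invIncl (X : GRep A M) : R.obj X ⟶ X.obj (SingleObj.star M) :=
  (adj.counit.app X).app (SingleObj.star M)

lemma invIncl_act (X : GRep A M) (m : M) : invIncl adj X ≫ X.act m = invIncl adj X :=
  ((adj.counit.app X).naturality m).symm.trans (Category.id_comp _)

lemma homEquiv_comp_invIncl {W : A} {X : GRep A M} (φ : (trivialRep A M).obj W ⟶ X) :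
    adj.homEquiv W X φ ≫ invIncl adj X = φ.app (SingleObj.star M) := by
  conv_rhs => rw [← (adj.homEquiv W X).symm_apply_apply φ, adj.homEquiv_counit]
  rfl

lemma mono_invIncl (X : GRep A M) : Mono (invIncl adj X) where
  right_cancellation a b h := (adj.homEquiv _ X).symm.injective <| hom_ext <| by
    simpa [Adjunction.homEquiv_counit, invIncl] using h

def invLift (X : GRep A M) {W : A} (f : W ⟶ X.obj (SingleObj.star M))
    (hf : ∀ m, f ≫ X.act m = f) : W ⟶ R.obj X :=
  adj.homEquiv W X (X.fromTrivial f hf)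

lemma invLift_comp_invIncl (X : GRep A M) {W : A} (f : W ⟶ X.obj (SingleObj.star M))
    (hf : ∀ m, f ≫ X.act m = f) : invLift adj X f hf ≫ invIncl adj X = f :=
  homEquiv_comp_invIncl adj _

lemma map_comp_invIncl {X Y : GRep A M} (f : X ⟶ Y) :
    R.map f ≫ invIncl adj Y = invIncl adj X ≫ f.app (SingleObj.star M) :=
  congrArg (fun t => t.app (SingleObj.star M)) (adj.counit.naturality f)

end Invariants

section Coinvariants

variable {L : GRep A M ⥤ A} (adj : L ⊣ trivialRep A M)

def coinvProj (X : GRep A M) : X.obj (SingleObj.star M) ⟶ L.obj X :=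
  (adj.unit.app X).app (SingleObj.star M)

lemma act_coinvProj (X : GRep A M) (m : M) : X.act m ≫ coinvProj adj X = coinvProj adj X :=
  ((adj.unit.app X).naturality m).trans (Category.comp_id _)

lemma coinvProj_comp_homEquiv_symm {X : GRep A M} {Z : A} (φ : X ⟶ (trivialRep A M).obj Z) :
    coinvProj adj X ≫ (adj.homEquiv X Z).symm φ = φ.app (SingleObj.star M) := by
  conv_rhs => rw [← (adj.homEquiv X Z).apply_symm_apply φ, adj.homEquiv_unit]
  rfl

def coinvDesc (X : GRep A M) {Z : A} (f : X.obj (SingleObj.star M) ⟶ Z)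
    (hf : ∀ m, X.act m ≫ f = f) : L.obj X ⟶ Z :=
  (adj.homEquiv X Z).symm (X.toTrivial f hf)

lemma coinvProj_comp_coinvDesc (X : GRep A M) {Z : A} (f : X.obj (SingleObj.star M) ⟶ Z)
    (hf : ∀ m, X.act m ≫ f = f) : coinvProj adj X ≫ coinvDesc adj X f hf = f :=
  coinvProj_comp_homEquiv_symm adj _

end Coinvariants

def normMap {R L : GRep A M ⥤ A} (adjR : trivialRep A M ⊣ R) (adjL : L ⊣ trivialRep A M)
    (X : GRep A M) : R.obj X ⟶ L.obj X :=
  invIncl adjR X ≫ coinvProj adjL X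

end Monoid

section RelativeTrace

variable {A : Type u} [Category.{v} A] {G : Type*} [Group G] {H : Subgroup G} {X : GRep A G}

lemma comp_act_out_mk {W : A} {f : W ⟶ X.obj (SingleObj.star G)}
    (hf : ∀ h ∈ H, f ≫ X.act h = f) (g : G) :
    f ≫ X.act (g : G ⧸ H).out = f ≫ X.act g := by
  obtain ⟨h, hh⟩ := QuotientGroup.mk_out_eq_mul H g
  rw [hh, act_mul, reassoc_of% (hf h h.2)]

lemma act_out_mk_inv_comp {Z : A} {f : X.obj (SingleObj.star G) ⟶ Z}
    (hf : ∀ h ∈ H, X.act h ≫ f = f) (g : G) :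
    X.act (g : G ⧸ H).out⁻¹ ≫ f = X.act g⁻¹ ≫ f := by
  obtain ⟨h, hh⟩ := QuotientGroup.mk_out_eq_mul H g
  rw [hh, mul_inv_rev, act_mul, Category.assoc, hf _ (H.inv_mem h.2)]

variable [Preadditive A] [Fintype (G ⧸ H)]

-- The sums run over the representatives `c.out` of the cosets; for `H`-invariant `f` the summands
-- do not depend on this choice.
variable (H X) in
noncomputable def relTrace {W : A} (f : W ⟶ X.obj (SingleObj.star G)) :
    W ⟶ X.obj (SingleObj.star G) :=
  ∑ c : G ⧸ H, f ≫ X.act c.out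

variable (H X) in
noncomputable def relCotrace {Z : A} (f : X.obj (SingleObj.star G) ⟶ Z) :
    X.obj (SingleObj.star G) ⟶ Z :=
  ∑ c : G ⧸ H, X.act c.out⁻¹ ≫ f

lemma relTrace_comp_act {W : A} {f : W ⟶ X.obj (SingleObj.star G)}
    (hf : ∀ h ∈ H, f ≫ X.act h = f) (g : G) : relTrace H X f ≫ X.act g = relTrace H X f := by
  have hc (c : G ⧸ H) : (f ≫ X.act c.out) ≫ X.act g = f ≫ X.act (g • c).out := by
    rw [← MulAction.Quotient.coe_smul_out, smul_eq_mul, comp_act_out_mk hf, act_mul,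
      Category.assoc]
  rw [relTrace, Preadditive.sum_comp, Finset.sum_congr rfl fun c _ => hc c]
  exact Equiv.sum_comp (MulAction.toPerm g) (fun c : G ⧸ H => f ≫ X.act c.out)

lemma act_comp_relCotrace {Z : A} {f : X.obj (SingleObj.star G) ⟶ Z}
    (hf : ∀ h ∈ H, X.act h ≫ f = f) (g : G) : X.act g ≫ relCotrace H X f = relCotrace H X f := by
  have hc (c : G ⧸ H) : X.act g ≫ X.act c.out⁻¹ ≫ f = X.act (g⁻¹ • c).out⁻¹ ≫ f := by
    rw [← MulAction.Quotient.coe_smul_out, smul_eq_mul, act_out_mk_inv_comp hf, mul_inv_rev,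
      inv_inv, act_mul, Category.assoc]
  rw [relCotrace, Preadditive.comp_sum, Finset.sum_congr rfl fun c _ => hc c]
  exact Equiv.sum_comp (MulAction.toPerm g⁻¹) (fun c : G ⧸ H => X.act c.out⁻¹ ≫ f)

lemma comp_relTrace {V W : A} (u : V ⟶ W) (f : W ⟶ X.obj (SingleObj.star G)) :
    u ≫ relTrace H X f = relTrace H X (u ≫ f) := by
  simp only [relTrace, Preadditive.comp_sum, Category.assoc]

lemma relTrace_of_invariant {W : A} {f : W ⟶ X.obj (SingleObj.star G)}
    (hf : ∀ g, f ≫ X.act g = f) : relTrace H X f = ∑ _c : G ⧸ H, f :=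
  Finset.sum_congr rfl fun c _ => hf c.out

lemma relTrace_comp_of_invariant {W Z : A} (f : W ⟶ X.obj (SingleObj.star G))
    {q : X.obj (SingleObj.star G) ⟶ Z} (hq : ∀ g, X.act g ≫ q = q) :
    relTrace H X f ≫ q = ∑ _c : G ⧸ H, f ≫ q := by
  simp only [relTrace, Preadditive.sum_comp, Category.assoc, hq]

lemma comp_relCotrace_of_invariant {W Z : A} {f : W ⟶ X.obj (SingleObj.star G)}
    (hf : ∀ g, f ≫ X.act g = f) (q : X.obj (SingleObj.star G) ⟶ Z) :
    f ≫ relCotrace H X q = ∑ _c : G ⧸ H, f ≫ q := by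
  simp only [relCotrace, Preadditive.comp_sum, reassoc_of% hf]

lemma relTrace_comp_eq_of_normalizer_le {k : Type*} [Semiring k] {p : ℕ} [Fact p.Prime]
    [CharP k p] [Linear k A] [Finite G] (P : Sylow p G)
    (hPH : Subgroup.normalizer ((P : Subgroup G) : Set G) ≤ H) {W Z : A}
    {f : W ⟶ X.obj (SingleObj.star G)} (hf : ∀ h ∈ H, f ≫ X.act h = f)
    {q : X.obj (SingleObj.star G) ⟶ Z} (hq : ∀ h ∈ H, X.act h ≫ q = q) :
    relTrace H X f ≫ q = f ≫ q := by
  have hP : (P : Subgroup G) ≤ H := Subgroup.le_normalizer.trans hPH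
  rw [relTrace, Preadditive.sum_comp]
  refine (P.sum_quotient_eq_of_normalizer_le (R := k) hPH _ fun x c => ?_).trans ?_
  · change (f ≫ X.act ((x : G) • c).out) ≫ q = _
    rw [← MulAction.Quotient.coe_smul_out, smul_eq_mul, comp_act_out_mk hf, act_mul,
      Category.assoc, Category.assoc, hq _ (hP x.2), Category.assoc]
  · rw [comp_act_out_mk hf, hf 1 H.one_mem]

end RelativeTrace

section RestrictionTransfer

variable {A : Type u} [Category.{v} A] {G : Type*} [Group G] (H : Subgroup G)
  {invG : GRep A G ⥤ A} (adjInvG : trivialRep A G ⊣ invG)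
  {coinvG : GRep A G ⥤ A} (adjCoinvG : coinvG ⊣ trivialRep A G)
  {invH : GRep A H ⥤ A} (adjInvH : trivialRep A H ⊣ invH)
  {coinvH : GRep A H ⥤ A} (adjCoinvH : coinvH ⊣ trivialRep A H) (X : GRep A G)

def invRes : invG.obj X ⟶ invH.obj ((resHom A H.subtype).obj X) :=
  adjInvH.homEquiv _ _ ((resHom A H.subtype).map (adjInvG.counit.app X))

def coinvCor : coinvH.obj ((resHom A H.subtype).obj X) ⟶ coinvG.obj X :=
  (adjCoinvH.homEquiv _ _).symm ((resHom A H.subtype).map (adjCoinvG.unit.app X))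

-- `invIncl` and `coinvProj` of the restriction, retyped through `X.obj star`: that object agrees
-- with `((resHom A H.subtype).obj X).obj star` only after unfolding `resHom`, which `rw` won't do.
def invInclRes : invH.obj ((resHom A H.subtype).obj X) ⟶ X.obj (SingleObj.star G) :=
  invIncl adjInvH ((resHom A H.subtype).obj X)

def coinvProjRes : X.obj (SingleObj.star G) ⟶ coinvH.obj ((resHom A H.subtype).obj X) :=
  coinvProj adjCoinvH ((resHom A H.subtype).obj X)

lemma normMap_res :
    normMap adjInvH adjCoinvH ((resHom A H.subtype).obj X) =
      invInclRes H adjInvH X ≫ coinvProjRes H adjCoinvH X :=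
  rfl

lemma invInclRes_act {h : G} (hh : h ∈ H) :
    invInclRes H adjInvH X ≫ X.act h = invInclRes H adjInvH X :=
  invIncl_act adjInvH _ ⟨h, hh⟩

lemma act_coinvProjRes {h : G} (hh : h ∈ H) :
    X.act h ≫ coinvProjRes H adjCoinvH X = coinvProjRes H adjCoinvH X :=
  act_coinvProj adjCoinvH ((resHom A H.subtype).obj X) ⟨h, hh⟩

lemma invRes_comp_invInclRes :
    invRes H adjInvG adjInvH X ≫ invInclRes H adjInvH X = invIncl adjInvG X :=
  homEquiv_comp_invIncl adjInvH _

lemma coinvProjRes_comp_coinvCor :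
    coinvProjRes H adjCoinvH X ≫ coinvCor H adjCoinvG adjCoinvH X = coinvProj adjCoinvG X :=
  coinvProj_comp_homEquiv_symm adjCoinvH _

lemma invRes_naturality {X Y : GRep A G} (f : X ⟶ Y) :
    invRes H adjInvG adjInvH X ≫ invH.map ((resHom A H.subtype).map f) =
      invG.map f ≫ invRes H adjInvG adjInvH Y := by
  have := mono_invIncl adjInvH ((resHom A H.subtype).obj Y)
  rw [← cancel_mono (invIncl adjInvH _), Category.assoc, map_comp_invIncl]
  change invRes H adjInvG adjInvH X ≫ invInclRes H adjInvH X ≫ f.app _ =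
    (invG.map f ≫ invRes H adjInvG adjInvH Y) ≫ invInclRes H adjInvH Y
  rw [reassoc_of% (invRes_comp_invInclRes H adjInvG adjInvH X), Category.assoc,
    invRes_comp_invInclRes, map_comp_invIncl]

variable [Preadditive A] [Fintype (G ⧸ H)]

noncomputable def invCor : invH.obj ((resHom A H.subtype).obj X) ⟶ invG.obj X :=
  invLift adjInvG X (relTrace H X (invInclRes H adjInvH X))
    (relTrace_comp_act fun _ => invInclRes_act H adjInvH X)

noncomputable def coinvRes : coinvG.obj X ⟶ coinvH.obj ((resHom A H.subtype).obj X) :=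
  coinvDesc adjCoinvG X (relCotrace H X (coinvProjRes H adjCoinvH X))
    (act_comp_relCotrace fun _ => act_coinvProjRes H adjCoinvH X)

lemma invCor_comp_invIncl :
    invCor H adjInvG adjInvH X ≫ invIncl adjInvG X = relTrace H X (invInclRes H adjInvH X) :=
  invLift_comp_invIncl adjInvG X _ _

lemma coinvProj_comp_coinvRes :
    coinvProj adjCoinvG X ≫ coinvRes H adjCoinvG adjCoinvH X =
      relCotrace H X (coinvProjRes H adjCoinvH X) :=
  coinvProj_comp_coinvDesc adjCoinvG X _ _

variable [Finite G] {p : ℕ} [Fact p.Prime] {P : Sylow p G}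

lemma invRes_comp_invCor (k : Type*) [Semiring k] [CharP k p] [Linear k A]
    (hPH : Subgroup.normalizer ((P : Subgroup G) : Set G) ≤ H) :
    invRes H adjInvG adjInvH X ≫ invCor H adjInvG adjInvH X = 𝟙 _ := by
  have := mono_invIncl adjInvG X
  rw [← cancel_mono (invIncl adjInvG X), Category.assoc, invCor_comp_invIncl, comp_relTrace,
    invRes_comp_invInclRes, relTrace_of_invariant (invIncl_act adjInvG X),
    P.sum_const_quotient_of_normalizer_le (R := k) hPH, Category.id_comp]

lemma invCor_comp_invRes_comp_normMap (k : Type*) [Semiring k] [CharP k p] [Linear k A]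
    (hPH : Subgroup.normalizer ((P : Subgroup G) : Set G) ≤ H) :
    invCor H adjInvG adjInvH X ≫ invRes H adjInvG adjInvH X ≫ normMap adjInvH adjCoinvH _ =
      normMap adjInvH adjCoinvH _ := by
  rw [normMap_res, reassoc_of% (invRes_comp_invInclRes H adjInvG adjInvH X),
    reassoc_of% (invCor_comp_invIncl H adjInvG adjInvH X)]
  exact relTrace_comp_eq_of_normalizer_le (k := k) P hPH
    (fun _ => invInclRes_act H adjInvH X) (fun _ => act_coinvProjRes H adjCoinvH X)

lemma invCor_comp_normMap (k : Type*) [Semiring k] [CharP k p] [Linear k A]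
    (hPH : Subgroup.normalizer ((P : Subgroup G) : Set G) ≤ H) :
    invCor H adjInvG adjInvH X ≫ normMap adjInvG adjCoinvG X =
      normMap adjInvH adjCoinvH _ ≫ coinvCor H adjCoinvG adjCoinvH X := by
  rw [normMap, normMap_res, reassoc_of% (invCor_comp_invIncl H adjInvG adjInvH X),
    Category.assoc, coinvProjRes_comp_coinvCor,
    relTrace_comp_of_invariant _ (act_coinvProj adjCoinvG X),
    P.sum_const_quotient_of_normalizer_le (R := k) hPH]

lemma invRes_comp_normMap (k : Type*) [Semiring k] [CharP k p] [Linear k A]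
    (hPH : Subgroup.normalizer ((P : Subgroup G) : Set G) ≤ H) :
    invRes H adjInvG adjInvH X ≫ normMap adjInvH adjCoinvH _ =
      normMap adjInvG adjCoinvG X ≫ coinvRes H adjCoinvG adjCoinvH X := by
  rw [normMap_res, normMap, reassoc_of% (invRes_comp_invInclRes H adjInvG adjInvH X),
    Category.assoc, coinvProj_comp_coinvRes,
    comp_relCotrace_of_invariant (invIncl_act adjInvG X),
    P.sum_const_quotient_of_normalizer_le (R := k) hPH]

variable {TG TH : A} {pG : invG.obj X ⟶ TG} {iG : TG ⟶ coinvG.obj X}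
  {pH : invH.obj ((resHom A H.subtype).obj X) ⟶ TH}
  {iH : TH ⟶ coinvH.obj ((resHom A H.subtype).obj X)} [StrongEpi pG] [Mono iG] [StrongEpi pH]
  [Mono iH]

noncomputable def imageNormMapIso (k : Type*) [Semiring k] [CharP k p] [Linear k A]
    (hPH : Subgroup.normalizer ((P : Subgroup G) : Set G) ≤ H)
    (hG : pG ≫ iG = normMap adjInvG adjCoinvG X)
    (hH : pH ≫ iH = normMap adjInvH adjCoinvH ((resHom A H.subtype).obj X)) : TG ≅ TH :=
  imageIsoOfRetract (invRes_comp_invCor H adjInvG adjInvH X k hPH)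
    (by simpa only [← hH] using
      invCor_comp_invRes_comp_normMap H adjInvG adjInvH adjCoinvH X k hPH)
    (by simpa only [← hG, ← hH, Category.assoc] using
      invCor_comp_normMap H adjInvG adjCoinvG adjInvH adjCoinvH X k hPH)
    (by simpa only [← hG, ← hH, Category.assoc] using
      invRes_comp_normMap H adjInvG adjCoinvG adjInvH adjCoinvH X k hPH)

variable (k : Type*) [Semiring k] [CharP k p] [Linear k A]
  (hPH : Subgroup.normalizer ((P : Subgroup G) : Set G) ≤ H)
  (hG : pG ≫ iG = normMap adjInvG adjCoinvG X)
  (hH : pH ≫ iH = normMap adjInvH adjCoinvH ((resHom A H.subtype).obj X))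

lemma comp_imageNormMapIso_hom :
    pG ≫ (imageNormMapIso H adjInvG adjCoinvG adjInvH adjCoinvH X k hPH hG hH).hom =
      invRes H adjInvG adjInvH X ≫ pH :=
  comp_imageIsoOfRetract_hom _ _ _ _

lemma imageNormMapIso_inv_comp :
    (imageNormMapIso H adjInvG adjCoinvG adjInvH adjCoinvH X k hPH hG hH).inv ≫ iG =
      iH ≫ coinvCor H adjCoinvG adjCoinvH X :=
  imageIsoOfRetract_inv_comp _ _ _ _

end RestrictionTransfer

end GRep

/-- Categorical Green-type correspondence.  Let `A` be a `k`-linear abelian category with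
`char k = p > 0`, `G` a finite group, `P` a Sylow `p`-subgroup and `L = N_G(P)` its
normalizer.  Suppose `H ≤ G` contains `L`.  Given the invariants/coinvariants functors
for `G` and `H` and the functors `Triv_G`, `Triv_H` (images of the canonical
transformations from invariants to coinvariants), one has `Triv_G ≅ Triv_H ∘ Res^G_H`;
moreover the canonical transformation `H^0(G,−) ⇒ Triv_H(Res^G_H −)` is epic and
`Triv_H(Res^G_H −) ⇒ H_0(G,−)` is monic. -/
theorem stmt_9 {k : Type*} [Field k] (p : ℕ) [Fact p.Prime] [CharP k p]
    {A : Type u} [Category.{v} A] [Abelian A] [Linear k A]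
    (G : Type*) [Group G] [Finite G]
    (P : Sylow p G) (H : Subgroup G)
    (hLH : Subgroup.normalizer ((P : Subgroup G) : Set G) ≤ H)
    (invG : GRep A G ⥤ A) (adjInvG : trivialRep A G ⊣ invG)
    (coinvG : GRep A G ⥤ A) (adjCoinvG : coinvG ⊣ trivialRep A G)
    (invH : GRep A H ⥤ A) (adjInvH : trivialRep A H ⊣ invH)
    (coinvH : GRep A H ⥤ A) (adjCoinvH : coinvH ⊣ trivialRep A H)
    (TrivG : GRep A G ⥤ A) (pG : invG ⟶ TrivG) (iG : TrivG ⟶ coinvG)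
    (hpG : ∀ X, Epi (pG.app X)) (hiG : ∀ X, Mono (iG.app X))
    (hfacG : ∀ X, pG.app X ≫ iG.app X =
      (adjInvG.counit.app X ≫ adjCoinvG.unit.app X).app (SingleObj.star G))
    (TrivH : GRep A H ⥤ A) (pH : invH ⟶ TrivH) (iH : TrivH ⟶ coinvH)
    (hpH : ∀ X, Epi (pH.app X)) (hiH : ∀ X, Mono (iH.app X))
    (hfacH : ∀ X, pH.app X ≫ iH.app X =
      (adjInvH.counit.app X ≫ adjCoinvH.unit.app X).app (SingleObj.star H)) :
    Nonempty (TrivG ≅ resHom A H.subtype ⋙ TrivH) ∧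
    (∀ X : GRep A G,
      Epi ((adjInvH.homEquiv (invG.obj X) ((resHom A H.subtype).obj X))
            ((resHom A H.subtype).map (adjInvG.counit.app X)) ≫
          pH.app ((resHom A H.subtype).obj X))) ∧
    (∀ X : GRep A G,
      Mono (iH.app ((resHom A H.subtype).obj X) ≫
          (adjCoinvH.homEquiv ((resHom A H.subtype).obj X) (coinvG.obj X)).symm
            ((resHom A H.subtype).map (adjCoinvG.unit.app X)))) := by
  have := Fintype.ofFinite (G ⧸ H)
  have := hpG; have := hpH; have := hiG; have := hiH
  have : ∀ X, StrongEpi (pG.app X) := fun X => strongEpi_of_epi _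
  have : ∀ X, StrongEpi (pH.app X) := fun X => strongEpi_of_epi _
  let e X := GRep.imageNormMapIso H adjInvG adjCoinvG adjInvH adjCoinvH X k hLH (hfacG X) (hfacH _)
  have he X := GRep.comp_imageNormMapIso_hom H adjInvG adjCoinvG adjInvH adjCoinvH X k hLH
    (hfacG X) (hfacH _)
  refine ⟨⟨NatIso.ofComponents e fun {X Y} f => ?_⟩, fun X => ?_, fun X => ?_⟩
  · rw [← cancel_epi (pG.app X), ← pG.naturality_assoc, he, reassoc_of% (he X), Functor.comp_map,
      ← pH.naturality, reassoc_of% (GRep.invRes_naturality H adjInvG adjInvH f)]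
  · change Epi (GRep.invRes H adjInvG adjInvH X ≫ pH.app _)
    rw [← he]
    exact epi_comp _ _
  · change Mono (iH.app _ ≫ GRep.coinvCor H adjCoinvG adjCoinvH X)
    rw [← GRep.imageNormMapIso_inv_comp H adjInvG adjCoinvG adjInvH adjCoinvH X k hLH
      (hfacG X) (hfacH _)]
    exact mono_comp _ _
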